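/- Let (I_{uv})_{u<v} be the edge indicators of an Erdős–Rényi random graph G(n,p), and for distinct vertices i, j, k, l define η_{ijkl} = I_{ij} I_{jk} I_{kl} I_{il} − p^3 (I_{ij} + I_{jk} + I_{kl} + I_{il}) + 3 p^4. If (i, j, k, l) and (u, v, w, m) are two quadruples of distinct vertices with |{i,j,k,l} ∩ {u,v,w,m}| ≤ 2, then E(η_{ijkl} η_{uvwm}) = 0. -/

import Mathlib

open MeasureTheory ProbabilityTheory
open scoped ENNReal NNReal

noncomputable section

/-- The Erdős–Rényi random graph measure `G(n,p)`: each potential edge (unordered pair of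
vertices) is present independently with probability `p`. -/
def erMeasure (n : ℕ) (p : ℝ≥0∞) : Measure (Sym2 (Fin n) → Bool) :=
  Measure.pi fun _ => (PMF.bernoulli (min p 1).toNNReal
    (by simpa using ENNReal.toNNReal_mono ENNReal.one_ne_top (min_le_right p 1))).toMeasure

/-- The indicator `I_{ij}` (as a real number) that there is an edge connecting `i` and `j`. -/
def edgeInd {n : ℕ} (ω : Sym2 (Fin n) → Bool) (i j : Fin n) : ℝ :=
  if ω (Sym2.mk i j) then 1 else 0

/-- `T₁`: the number of edges. -/
def T1 {n : ℕ} (ω : Sym2 (Fin n) → Bool) : ℝ :=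
  ∑ i : Fin n, ∑ j : Fin n, if i < j then edgeInd ω i j else 0

/-- `T₂`: the number of 4-cycles. -/
def T2 {n : ℕ} (ω : Sym2 (Fin n) → Bool) : ℝ :=
  (1 / 8) * ∑ i : Fin n, ∑ j : Fin n, ∑ k : Fin n, ∑ l : Fin n,
    if i ≠ j ∧ i ≠ k ∧ i ≠ l ∧ j ≠ k ∧ j ≠ l ∧ k ≠ l then
      edgeInd ω i j * edgeInd ω j k * edgeInd ω k l * edgeInd ω l i
    else 0

/-- The normalised edge count `W₁(p, Gₙ)`. -/
def W1 (n : ℕ) (p : ℝ) (ω : Sym2 (Fin n) → Bool) : ℝ :=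
  (T1 ω - (n.choose 2 : ℝ) * p) / Real.sqrt ((n.choose 2 : ℝ) * p * (1 - p))

/-- The corrected and normalised 4-cycle count `W₂(p, Gₙ)`. -/
def W2 (n : ℕ) (p : ℝ) (ω : Sym2 (Fin n) → Bool) : ℝ :=
  (T2 ω - 2 * ((n - 2).choose 2 : ℝ) * p ^ 3 * T1 ω + 9 * (n.choose 4 : ℝ) * p ^ 4) /
    Real.sqrt (3 * (n.choose 4 : ℝ) * (p ^ 4 * (1 - 4 * p ^ 3 + 3 * p ^ 4)
      + (4 * ((n : ℝ) - 4) + 2) * p ^ 6 * (1 - 2 * p + p ^ 2)))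

/-- `η_{ijkl}`. -/
def eta {n : ℕ} (p : ℝ) (i j k l : Fin n) (ω : Sym2 (Fin n) → Bool) : ℝ :=
  edgeInd ω i j * edgeInd ω j k * edgeInd ω k l * edgeInd ω i l
    - p ^ 3 * (edgeInd ω i j + edgeInd ω j k + edgeInd ω k l + edgeInd ω i l)
    + 3 * p ^ 4

/-! For a set `A` of edges let `J_A` be the indicator that all of them are present, so that
`E J_A = p ^ |A|` and `J_A J_B = J_{A ∪ B}`. With `a = |A|`, the function
`η_A = J_A - p^(a-1) ∑_{e ∈ A} J_{e} + (a-1) p^a` is orthogonal to `J_T` whenever `|T ∩ A| ≤ 1`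
(a direct computation), and `η_{ijkl}` is `η_C` for the edge set `C` of the 4-cycle `ijkl`.
Expanding `η_D` for the second 4-cycle `D` as a combination of `J_D`, the `J_{e}` with `e ∈ D`
and `J_∅`, each of which meets `C` in at most one edge, gives `E(η_C η_D) = 0`: the two cycles
share at most one edge, because two distinct edges span three vertices and the cycles share at
most two. -/

open Finset

def edgeSetInd {E : Type*} (S : Finset E) (ω : E → Bool) : ℝ :=
  if ∀ e ∈ S, ω e then 1 else 0

section EdgeSets

variable {E : Type*}

theorem edgeSetInd_union [DecidableEq E] (S T : Finset E) (ω : E → Bool) :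
    edgeSetInd (S ∪ T) ω = edgeSetInd S ω * edgeSetInd T ω := by
  simp only [edgeSetInd, forall_mem_union]
  split_ifs <;> simp_all

theorem edgeSetInd_empty (ω : E → Bool) : edgeSetInd ∅ ω = 1 := by
  simp [edgeSetInd]

theorem edgeSetInd_singleton (e : E) (ω : E → Bool) :
    edgeSetInd {e} ω = if ω e then 1 else 0 := by
  simp [edgeSetInd]

def centeredEdgeSetInd (p : ℝ) (A : Finset E) (ω : E → Bool) : ℝ :=
  edgeSetInd A ω - p ^ (#A - 1) * ∑ e ∈ A, edgeSetInd {e} ω + (#A - 1 : ℝ) * p ^ #A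

theorem sum_pow_card_insert [DecidableEq E] (p : ℝ) (A T : Finset E) :
    ∑ e ∈ A, p ^ #(insert e T) = p ^ #T * (#(A ∩ T) + #(A \ T) * p) := by
  simp only [card_insert_eq_ite, apply_ite (p ^ ·), pow_succ, sum_ite, filter_mem_eq_inter,
    filter_notMem_eq_sdiff, sum_const, nsmul_eq_mul]
  ring

end EdgeSets

section ErdosRenyi

variable {n : ℕ} {p : ℝ}

instance (n : ℕ) (q : ℝ≥0∞) : IsProbabilityMeasure (erMeasure n q) := by
  unfold erMeasure; infer_instance

theorem integral_edgeSetInd (hp0 : 0 ≤ p) (hp1 : p ≤ 1) (S : Finset (Sym2 (Fin n))) :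
    ∫ ω, edgeSetInd S ω ∂erMeasure n (ENNReal.ofReal p) = p ^ #S := by
  classical
  have hind : edgeSetInd S =
      (Set.univ.pi fun e => if e ∈ S then {true} else Set.univ).indicator 1 := by
    ext ω
    simp only [edgeSetInd, Set.indicator_apply, Set.mem_univ_pi]
    congr 1
    refine propext (forall_congr' fun e => ?_)
    split_ifs <;> simp [*]
  rw [hind, integral_indicator_one (MeasurableSet.univ_pi fun _ => .of_discrete), measureReal_def,
    erMeasure, Measure.pi_pi]
  have hmin : min (ENNReal.ofReal p) 1 = ENNReal.ofReal p :=
    min_eq_left (ENNReal.ofReal_le_one.2 hp1)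
  simp only [apply_ite, measure_univ, PMF.toMeasure_apply_singleton _ _ .of_discrete,
    PMF.bernoulli_apply, hmin, cond_true]
  rw [prod_ite_mem]
  simp [hp0]

theorem integral_edgeSetInd_mul_centeredEdgeSetInd (hp0 : 0 ≤ p) (hp1 : p ≤ 1)
    {A T : Finset (Sym2 (Fin n))} (hTA : #(T ∩ A) ≤ 1) :
    ∫ ω, edgeSetInd T ω * centeredEdgeSetInd p A ω ∂erMeasure n (ENNReal.ofReal p) = 0 := by
  have hexpand : ∀ ω, edgeSetInd T ω * centeredEdgeSetInd p A ω =
      edgeSetInd (T ∪ A) ω - p ^ (#A - 1) * ∑ e ∈ A, edgeSetInd (insert e T) ω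
        + (#A - 1 : ℝ) * p ^ #A * edgeSetInd T ω := by
    intro ω
    simp only [centeredEdgeSetInd, ← union_singleton, edgeSetInd_union, ← mul_sum]
    ring
  simp only [hexpand]
  rw [integral_add .of_finite .of_finite, integral_sub .of_finite .of_finite, integral_const_mul,
    integral_const_mul, integral_finsetSum _ fun _ _ => .of_finite]
  simp only [integral_edgeSetInd hp0 hp1, sum_pow_card_insert]
  have hunion := card_union_add_card_inter T A
  have hsdiff := card_sdiff_add_card_inter A T
  rw [inter_comm A T] at hsdiff ⊢
  rw [show #(T ∪ A) = #T + #(A \ T) by omega, ← hsdiff]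
  generalize #(A \ T) = d, #(T ∩ A) = c at hTA ⊢
  interval_cases c
  · rcases d with _ | d
    · simp
    · push_cast
      ring
  · push_cast
    ring

theorem integral_centeredEdgeSetInd_mul_centeredEdgeSetInd (hp0 : 0 ≤ p) (hp1 : p ≤ 1)
    {A B : Finset (Sym2 (Fin n))} (hAB : #(A ∩ B) ≤ 1) :
    ∫ ω, centeredEdgeSetInd p A ω * centeredEdgeSetInd p B ω
      ∂erMeasure n (ENNReal.ofReal p) = 0 := by
  have hexpand : ∀ ω, centeredEdgeSetInd p A ω * centeredEdgeSetInd p B ω =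
      edgeSetInd A ω * centeredEdgeSetInd p B ω
        - p ^ (#A - 1) * ∑ e ∈ A, edgeSetInd {e} ω * centeredEdgeSetInd p B ω
        + (#A - 1 : ℝ) * p ^ #A * (edgeSetInd ∅ ω * centeredEdgeSetInd p B ω) := by
    intro ω
    rw [centeredEdgeSetInd, edgeSetInd_empty, ← sum_mul]
    ring
  have hsingleton : ∀ e ∈ A, #({e} ∩ B) ≤ 1 := fun e _ =>
    (card_le_card inter_subset_left).trans (card_singleton e).le
  simp only [hexpand]
  rw [integral_add .of_finite .of_finite, integral_sub .of_finite .of_finite, integral_const_mul,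
    integral_const_mul, integral_finsetSum _ fun _ _ => .of_finite,
    integral_edgeSetInd_mul_centeredEdgeSetInd hp0 hp1 hAB,
    integral_edgeSetInd_mul_centeredEdgeSetInd hp0 hp1 (by simp),
    sum_eq_zero fun e he => integral_edgeSetInd_mul_centeredEdgeSetInd hp0 hp1 (hsingleton e he)]
  ring

end ErdosRenyi

theorem Sym2.exists_mem_notMem_of_ne {V : Type*} {e f : Sym2 V} (hf : ¬f.IsDiag)
    (hef : e ≠ f) : ∃ z ∈ f, z ∉ e := by
  by_contra! h
  induction e using Sym2.ind with | _ x y => ?_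
  induction f using Sym2.ind with | _ a b => ?_
  simp only [Sym2.mem_iff, forall_eq_or_imp, forall_eq] at h
  simp only [Sym2.mk_isDiag_iff] at hf
  apply hef
  rw [Sym2.eq_iff]
  rcases h with ⟨rfl | rfl, rfl | rfl⟩ <;> simp_all

section FourCycle

variable {V : Type*} [DecidableEq V]

def fourCycle (i j k l : V) : Finset (Sym2 V) := {s(i, j), s(j, k), s(k, l), s(i, l)}

variable {i j k l : V}

theorem sum_fourCycle {M : Type*} [AddCommMonoid M] (f : Sym2 V → M)
    (hij : i ≠ j) (hik : i ≠ k) (hil : i ≠ l) (hjk : j ≠ k) (hjl : j ≠ l) (hkl : k ≠ l) :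
    ∑ e ∈ fourCycle i j k l, f e = f s(i, j) + f s(j, k) + f s(k, l) + f s(i, l) := by
  rw [fourCycle, sum_insert, sum_insert, sum_insert, sum_singleton, add_assoc, add_assoc] <;>
    simp <;> tauto

theorem card_fourCycle
    (hij : i ≠ j) (hik : i ≠ k) (hil : i ≠ l) (hjk : j ≠ k) (hjl : j ≠ l) (hkl : k ≠ l) :
    #(fourCycle i j k l) = 4 := by
  rw [card_eq_sum_ones, sum_fourCycle _ hij hik hil hjk hjl hkl]

theorem fourCycle_subset_sym2 : fourCycle i j k l ⊆ ({i, j, k, l} : Finset V).sym2 := by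
  simp [fourCycle, insert_subset_iff]

theorem not_isDiag_of_mem_fourCycle {e : Sym2 V} (he : e ∈ fourCycle i j k l)
    (hij : i ≠ j) (hjk : j ≠ k) (hkl : k ≠ l) (hil : i ≠ l) : ¬e.IsDiag := by
  simp only [fourCycle, mem_insert, mem_singleton] at he
  rcases he with rfl | rfl | rfl | rfl <;> simpa

theorem card_inter_le_one_of_subset_sym2 {A B : Finset (Sym2 V)} {X Y : Finset V}
    (hA : A ⊆ X.sym2) (hB : B ⊆ Y.sym2) (hdiag : ∀ e ∈ B, ¬e.IsDiag) (hXY : #(X ∩ Y) ≤ 2) :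
    #(A ∩ B) ≤ 1 := by
  by_contra! h
  obtain ⟨e, he, f, hf, hef⟩ := one_lt_card.1 h
  have hsub : A ∩ B ⊆ (X ∩ Y).sym2 := fun g hg => mem_sym2_iff.2 fun x hx => mem_inter.2
    ⟨mem_sym2_iff.1 (hA (mem_inter.1 hg).1) x hx, mem_sym2_iff.1 (hB (mem_inter.1 hg).2) x hx⟩
  obtain ⟨z, hzf, hze⟩ := Sym2.exists_mem_notMem_of_ne (hdiag f (mem_inter.1 hf).2) hef
  have hedge := hdiag e (mem_inter.1 he).2
  have he' := hsub he
  have hf' := hsub hf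
  induction e using Sym2.ind with | _ x y => ?_
  simp only [Sym2.mem_iff, not_or, Sym2.mk_isDiag_iff, mk_mem_sym2_iff] at hze hedge he'
  refine hXY.not_gt (two_lt_card.2 ⟨x, he'.1, y, he'.2, z, mem_sym2_iff.1 hf' z hzf, hedge, ?_, ?_⟩)
  · exact fun h => hze.1 h.symm
  · exact fun h => hze.2 h.symm

end FourCycle

theorem eta_eq_centeredEdgeSetInd {n : ℕ} (p : ℝ) {i j k l : Fin n}
    (hij : i ≠ j) (hik : i ≠ k) (hil : i ≠ l) (hjk : j ≠ k) (hjl : j ≠ l) (hkl : k ≠ l) :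
    eta p i j k l = centeredEdgeSetInd p (fourCycle i j k l) := by
  funext ω
  rw [centeredEdgeSetInd, card_fourCycle hij hik hil hjk hjl hkl,
    sum_fourCycle _ hij hik hil hjk hjl hkl]
  simp only [eta, edgeInd, fourCycle, insert_eq, edgeSetInd_union, edgeSetInd_singleton]
  norm_num

/-- **Lemma 3.5 (second part)**: `E(η_{ijkl} η_{uvwm}) = 0` whenever the two quadruples
of distinct vertices share at most two vertices. -/
theorem eta_product_mean_zero (n : ℕ) (p : ℝ) (hp : 0 < p) (hp1 : p < 1)
    (i j k l u v w m : Fin n)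
    (hij : i ≠ j) (hik : i ≠ k) (hil : i ≠ l) (hjk : j ≠ k) (hjl : j ≠ l) (hkl : k ≠ l)
    (huv : u ≠ v) (huw : u ≠ w) (hum : u ≠ m) (hvw : v ≠ w) (hvm : v ≠ m) (hwm : w ≠ m)
    (hcap : (({i, j, k, l} : Finset (Fin n)) ∩ {u, v, w, m}).card ≤ 2) :
    ∫ ω, eta p i j k l ω * eta p u v w m ω ∂(erMeasure n (ENNReal.ofReal p)) = 0 := by
  have hedges : #(fourCycle i j k l ∩ fourCycle u v w m) ≤ 1 :=
    card_inter_le_one_of_subset_sym2 fourCycle_subset_sym2 fourCycle_subset_sym2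
      (fun _ he => not_isDiag_of_mem_fourCycle he huv hvw hwm hum) hcap
  rw [eta_eq_centeredEdgeSetInd p hij hik hil hjk hjl hkl,
    eta_eq_centeredEdgeSetInd p huv huw hum hvw hvm hwm]
  exact integral_centeredEdgeSetInd_mul_centeredEdgeSetInd hp.le hp1.le hedges

end
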